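/- If P has full rank and uᵀ c = 0, then f has a fixed point. -/
import Mathlib

open Matrix

theorem stmt8 (n : ℕ) (hn : 2 ≤ n) (A : Matrix (Fin n) (Fin n) ℝ) (b c : Fin n → ℝ)
    (f : (Fin n → ℝ) → (Fin n → ℝ))
    (hf : ∀ x : Fin n → ℝ, f x = A.mulVec x + |x ⟨0, by omega⟩| • b + c)
    (hP : LinearIndependent ℝ
      (fun j : Fin (n - 1) => fun i : Fin n => (1 - A) i ⟨j.1 + 1, by have := j.2; omega⟩))
    (huc : vecMul (Pi.single ⟨0, by omega⟩ 1) (adjugate (1 - A)) ⬝ᵥ c = 0) :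
    ∃ x : Fin n → ℝ, f x = x := by
  obtain ⟨m, rfl⟩ : ∃ m, n = m + 1 := ⟨n - 1, by omega⟩
  set M : Matrix (Fin (m + 1)) (Fin (m + 1)) ℝ := 1 - A with hMdef
  have h0 : (⟨0, by omega⟩ : Fin (m + 1)) = 0 := rfl
  -- Step 1: huc gives det of M with column 0 replaced by c is zero
  have hdet : (M.updateCol 0 c).det = 0 := by
    have h1 : vecMul (Pi.single (0 : Fin (m+1)) 1) (adjugate M) ⬝ᵥ c
        = (adjugate M *ᵥ c) 0 := by
      rw [← dotProduct_mulVec]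
      simp
    have h2 : (adjugate M *ᵥ c) 0 = 0 := by
      rw [← h1]
      rw [h0] at huc
      exact huc
    rw [← cramer_eq_adjugate_mulVec, cramer_apply] at h2
    exact h2
  -- Step 2: get a dependence among columns of updateColumn
  obtain ⟨v, hv, hvz⟩ := (Matrix.exists_mulVec_eq_zero_iff).2 hdet
  -- Step 3: v 0 ≠ 0, else contradict hP
  have hv0 : v 0 ≠ 0 := by
    intro hv0
    have key : ∑ j : Fin m, v j.succ • (fun i : Fin (m+1) => M i j.succ) = 0 := by
      funext i
      have h := congrFun hvz i
      simp only [mulVec, dotProduct, Fin.sum_univ_succ, Matrix.updateCol_apply,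
        if_pos rfl, if_true, Fin.succ_ne_zero, if_false, Pi.zero_apply, hv0, mul_zero, zero_add] at h
      simpa [Finset.sum_apply, mul_comm] using h
    have hall : ∀ j : Fin (m + 1 - 1), v j.succ = 0 :=
      Fintype.linearIndependent_iff.1 hP (fun j => v j.succ) key
    apply hv
    funext i
    induction i using Fin.cases with
    | zero => simpa using hv0
    | succ j => simpa using hall j
  -- Step 4: build the fixed point
  set x : Fin (m + 1) → ℝ := fun i => if i = 0 then 0 else -(v 0)⁻¹ * v i with hx
  have hx0 : x 0 = 0 := by simp [hx]
  have hMx : M *ᵥ x = c := by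
    funext i
    have h := congrFun hvz i
    simp only [mulVec, dotProduct, Fin.sum_univ_succ, Matrix.updateCol_apply,
      if_pos rfl, if_true, Fin.succ_ne_zero, if_false, Pi.zero_apply] at h
    have h2 : ∑ j : Fin m, M i j.succ * v j.succ = -(c i * v 0) := by linarith
    show ∑ j : Fin (m+1), M i j * x j = c i
    rw [Fin.sum_univ_succ]
    have hxs : ∀ j : Fin m, x j.succ = -(v 0)⁻¹ * v j.succ := by
      intro j; simp [hx, Fin.succ_ne_zero]
    simp only [hxs, hx0, mul_zero, zero_add]
    have h3 : ∑ j : Fin m, M i j.succ * (-(v 0)⁻¹ * v j.succ)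
        = -(v 0)⁻¹ * ∑ j : Fin m, M i j.succ * v j.succ := by
      rw [Finset.mul_sum]; exact Finset.sum_congr rfl fun j _ => by ring
    rw [h3, h2]
    field_simp
  refine ⟨x, ?_⟩
  rw [hf x, h0, hx0, abs_zero, zero_smul, add_zero]
  funext i
  have h := congrFun hMx i
  rw [hMdef] at h
  simp only [Matrix.sub_mulVec, Matrix.one_mulVec, Pi.sub_apply] at h
  simp only [Pi.add_apply]
  linarith
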